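/- arXiv:2010.04939 — 2 statements merged into one kernel-verified Lean document; each statement's English description precedes it below -/
import Mathlib

section
/- Let B be a left semi-brace. If I is an ideal of B, then b·x ∈ I and x·b ∈ I for all x ∈ I and b ∈ B (hence B·I ⊆ I and I·B ⊆ I, where X·Y denotes the subgroup of (G,+) generated by {x·y : x ∈ X, y ∈ Y}). -/
/-- A left semi-brace: `(B,+)` is a left cancellative semigroup, `(B,*)` is a group
(whose identity `1` plays the role of `0` in the additive notation of the paper, and
`a⁻¹` plays the role of `a⁻`), and `a ∘ (b + c) = a ∘ b + a ∘ (a⁻ + c)` holds. -/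
class LeftSemiBrace (B : Type*) extends Group B, Add B where
  add_assoc : ∀ a b c : B, a + b + c = a + (b + c)
  add_left_cancel : ∀ a b c : B, a + b = a + c → b = c
  circ_add : ∀ a b c : B, a * (b + c) = a * b + a * (a⁻¹ + c)

namespace LeftSemiBrace

variable {B : Type*} [LeftSemiBrace B]

/-- The set `E` of additive idempotents. -/
def E (B : Type*) [LeftSemiBrace B] : Set B := {e | e + e = e}

/-- The set `G = B + 0`. -/
def G (B : Type*) [LeftSemiBrace B] : Set B := {x | ∃ b : B, x = b + 1}

/-- `λ_a (b) = a ∘ (a⁻ + b)`. -/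
def lam (a b : B) : B := a * (a⁻¹ + b)

/-- `ρ_b (a) = (a⁻ + b)⁻ ∘ b`. -/
def rho (b a : B) : B := (a⁻¹ + b)⁻¹ * b

/-- `a · b = λ_a(a⁻) + a ∘ b + λ_b(b⁻)`. -/
def dot (a b : B) : B := lam a a⁻¹ + a * b + lam b b⁻¹

/-- The group part `g_b = b + 0` of an element `b`. -/
def gp (b : B) : B := b + 1

/-- The additive inverse (within the group `(G,+)`) of the group part of an element:
for `g ∈ G` one has `neg g = -g`, since `-g_a = λ_a(a⁻) = a ∘ (a⁻ + a⁻)`. -/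
def neg (a : B) : B := a * (a⁻¹ + a⁻¹)

/-- The idempotent part `e_b = -g_b + b` of an element `b`. -/
def ep (b : B) : B := neg (gp b) + b

/-- `S` is a subsemigroup of `(B,+)`. -/
def IsAddSubsemigroup (S : Set B) : Prop := ∀ x ∈ S, ∀ y ∈ S, x + y ∈ S

/-- `S` is a subgroup of the multiplicative group `(B,∘)`. -/
def IsCircSubgroup (S : Set B) : Prop :=
  (1 : B) ∈ S ∧ (∀ x ∈ S, ∀ y ∈ S, x * y ∈ S) ∧ ∀ x ∈ S, x⁻¹ ∈ S

/-- `S` is a normal subgroup of the multiplicative group `(B,∘)`. -/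
def IsCircNormal (S : Set B) : Prop :=
  IsCircSubgroup S ∧ ∀ x ∈ S, ∀ b : B, b * x * b⁻¹ ∈ S

/-- `S` is a subgroup of the group `(G,+)`. -/
def IsAddSubgroupOfG (S : Set B) : Prop :=
  S ⊆ G B ∧ (1 : B) ∈ S ∧ (∀ x ∈ S, ∀ y ∈ S, x + y ∈ S) ∧ ∀ x ∈ S, neg x ∈ S

/-- `S` is a normal subgroup of the group `(G,+)`. -/
def IsAddNormalSubgroupOfG (S : Set B) : Prop :=
  IsAddSubgroupOfG S ∧ ∀ g ∈ G B, ∀ x ∈ S, g + x + neg g ∈ S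

/-- `I` is an ideal of the left semi-brace `B` (Definition 17 of Catino–Colazzo–Stefanelli):
`I` is a subsemigroup of `(B,+)`, a normal subgroup of `(B,∘)`, `I ∩ G` is a normal
subgroup of `(G,+)`, `ρ_b(n) ∈ I` for all `b ∈ B`, `n ∈ I ∩ G`, and `λ_g(e) ∈ I` for all
`g ∈ G`, `e ∈ I ∩ E`. -/
def IsIdeal (I : Set B) : Prop :=
  IsAddSubsemigroup I ∧ IsCircNormal I ∧ IsAddNormalSubgroupOfG (I ∩ G B) ∧
    (∀ b : B, ∀ n ∈ I ∩ G B, rho b n ∈ I) ∧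
    (∀ g ∈ G B, ∀ e ∈ I ∩ E B, lam g e ∈ I)

/-- `I` is a left ideal of the left semi-brace `B`. -/
def IsLeftIdeal (I : Set B) : Prop :=
  (∀ x ∈ I, x + 1 ∈ I) ∧ IsAddSubgroupOfG (I ∩ G B) ∧
    (∀ g ∈ G B, ∀ x ∈ I, lam g x ∈ I) ∧ IsCircSubgroup I

/-- The subgroup of `(G,+)` generated by a subset `S` of `G`. -/
def addClosure (S : Set B) : Set B :=
  ⋂₀ {T : Set B | S ⊆ T ∧ (1 : B) ∈ T ∧ (∀ x ∈ T, ∀ y ∈ T, x + y ∈ T) ∧ ∀ x ∈ T, neg x ∈ T}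

/-- `X · Y`: the subgroup of `(G,+)` generated by `{x · y : x ∈ X, y ∈ Y}`. -/
def dotSet (X Y : Set B) : Set B := addClosure {z | ∃ x ∈ X, ∃ y ∈ Y, z = dot x y}

/-- `S + E = {s + e : s ∈ S, e ∈ E}`. -/
def addE (S : Set B) : Set B := {z | ∃ s ∈ S, ∃ e ∈ E B, z = s + e}

/-- The right series of `B`: `rightSeries B n = B^(n+1)`, where `B^(1) = B` and
`B^(n+1) = B^(n) · B + E`. -/
def rightSeries (B : Type*) [LeftSemiBrace B] : ℕ → Set B
  | 0 => Set.univ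
  | n + 1 => addE (dotSet (rightSeries B n) Set.univ)

/-- The left series of `B`: `leftSeries B n = B^(n+1)`, where `B^1 = B` and
`B^(n+1) = B · B^n + E`. -/
def leftSeries (B : Type*) [LeftSemiBrace B] : ℕ → Set B
  | 0 => Set.univ
  | n + 1 => addE (dotSet Set.univ (leftSeries B n))

/-- The right series of the skew left brace `G`: `rightSeriesG B n = G^(n+1)`, where
`G^(1) = G` and `G^(n+1) = G^(n) · G`. -/
def rightSeriesG (B : Type*) [LeftSemiBrace B] : ℕ → Set B
  | 0 => G B
  | n + 1 => dotSet (rightSeriesG B n) (G B)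

/-- The series `bracketSeries B n = B^[n+1]`, where `B^[1] = B` and `B^[n+1] = H_n + E`
with `H_n` the subgroup of `(G,+)` generated by `⋃_{i=1}^{n} B^[i] · B^[n+1-i]`. -/
def bracketSeries (B : Type*) [LeftSemiBrace B] : ℕ → Set B
  | 0 => Set.univ
  | n + 1 =>
      addE (addClosure (⋃ i : Fin (n + 1),
        dotSet (bracketSeries B i.1) (bracketSeries B (n - i.1))))
  decreasing_by
  · exact i.isLt
  · exact Nat.lt_succ_of_le (Nat.sub_le n i.1)

/-- The socle `Soc(B) = {a ∈ B : ρ_a = ρ_0, λ_a = λ_0}`. -/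
def Soc (B : Type*) [LeftSemiBrace B] : Set B :=
  {a | rho a = rho (1 : B) ∧ lam a = lam (1 : B)}

/-- The generalized socle `Zoc(B) = Soc(B) + E`. -/
def Zoc (B : Type*) [LeftSemiBrace B] : Set B :=
  {z | ∃ a ∈ Soc B, ∃ e ∈ E B, z = a + e}

/-- The lower central series of the group `(G,+)`:  `γ_1 = G` and `γ_{n+1}` is the
subgroup of `(G,+)` generated by the additive commutators `-x - y + x + y` with
`x ∈ γ_n`, `y ∈ G`. -/
def lowerCentralSeriesG (B : Type*) [LeftSemiBrace B] : ℕ → Set B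
  | 0 => G B
  | n + 1 => addClosure
      {z | ∃ x ∈ lowerCentralSeriesG B n, ∃ y ∈ G B, z = neg x + neg y + x + y}

/-- The group `(G,+)` is nilpotent. -/
def IsNilpotentGAdd (B : Type*) [LeftSemiBrace B] : Prop :=
  ∃ n : ℕ, lowerCentralSeriesG B n = {(1 : B)}

/-! ### Auxiliary lemmas -/

instance : AddSemigroup B :=
  { (inferInstance : Add B) with add_assoc := LeftSemiBrace.add_assoc }

instance : AddLeftCancelSemigroup B :=
  { (inferInstance : AddSemigroup B) with add_left_cancel := LeftSemiBrace.add_left_cancel }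

theorem oneAddOne : (1 : B) + 1 = 1 := by
  have h := LeftSemiBrace.circ_add (1 : B) 1 1
  simp only [one_mul, inv_one] at h
  exact (LeftSemiBrace.add_left_cancel 1 1 (1 + 1) h).symm

theorem oneAdd (a : B) : (1 : B) + a = a :=
  _root_.add_left_cancel (a := (1 : B)) (by rw [← add_assoc, oneAddOne])

theorem circAdd' (a b c : B) : a * (b + c) = a * b + lam a c :=
  LeftSemiBrace.circ_add a b c

theorem mulEqAddLam (a b : B) : a * b = a + lam a b := by
  have h := circAdd' a 1 b
  rwa [oneAdd, mul_one] at h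

theorem addEqMulLam (a b : B) : a + b = a * lam a⁻¹ b := by
  rw [lam, inv_inv, mul_inv_cancel_left]

theorem lamAdd (a b c : B) : lam a (b + c) = lam a b + lam a c := by
  have h := LeftSemiBrace.circ_add a (a⁻¹ + b) c
  rw [add_assoc] at h
  exact h

theorem idemAdd {e : B} (he : e ∈ E B) (z : B) : e + z = z :=
  _root_.add_left_cancel (a := e) (by rw [← add_assoc, show e + e = e from he])

theorem addNegSelf (a : B) : a + neg a = 1 := by
  have h := mulEqAddLam a a⁻¹
  rw [mul_inv_cancel] at h
  exact h.symm

theorem negAddOne (a : B) : neg a + 1 = neg a :=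
  _root_.add_left_cancel (a := a) (by rw [← add_assoc, addNegSelf, oneAddOne])

theorem negMemG (a : B) : neg a ∈ G B := ⟨neg a, (negAddOne a).symm⟩

theorem GAddOne {g : B} (hg : g ∈ G B) : g + 1 = g := by
  obtain ⟨b, rfl⟩ := hg
  rw [add_assoc, oneAddOne]

theorem negAddSelf {g : B} (hg : g ∈ G B) : neg g + g = 1 :=
  _root_.add_left_cancel (a := g) (by rw [← add_assoc, addNegSelf, oneAdd, GAddOne hg])

theorem negGp (a : B) : neg (gp a) = neg a :=
  _root_.add_left_cancel (a := gp a) (by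
    rw [addNegSelf (gp a)]
    show (1 : B) = a + 1 + neg a
    rw [add_assoc, oneAdd, addNegSelf])

theorem negNegG {g : B} (hg : g ∈ G B) : neg (neg g) = g :=
  _root_.add_left_cancel (a := neg g) (by rw [addNegSelf, negAddSelf hg])

theorem gpMemG (a : B) : gp a ∈ G B := ⟨a, rfl⟩

theorem gpAddEp (a : B) : gp a + ep a = a := by
  show gp a + (neg (gp a) + a) = a
  rw [← add_assoc, addNegSelf, oneAdd]

theorem epEq (a : B) : ep a = neg a + a := by
  show neg (gp a) + a = neg a + a
  rw [negGp]

theorem epMemE (a : B) : ep a ∈ E B := by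
  show ep a + ep a = ep a
  rw [epEq, add_assoc, ← add_assoc a (neg a) a, addNegSelf, oneAdd]

theorem lamMemE (a : B) {e : B} (he : e ∈ E B) : lam a e ∈ E B := by
  show lam a e + lam a e = lam a e
  rw [← lamAdd, show e + e = e from he]

theorem lamOneEp (a : B) : lam a 1 = ep a :=
  _root_.add_left_cancel (a := a) (by
    rw [← mulEqAddLam, mul_one, epEq, ← add_assoc, addNegSelf, oneAdd])

theorem lamGOne {g : B} (hg : g ∈ G B) : lam g 1 = 1 := by
  rw [lamOneEp, epEq, negAddSelf hg]

theorem memGInv {g : B} (hg : g ∈ G B) : g⁻¹ ∈ G B := by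
  have h : g * (g⁻¹ + 1) = g * g⁻¹ := by
    rw [mul_inv_cancel]
    exact lamGOne hg
  exact ⟨g⁻¹, (mul_left_cancel h).symm⟩

theorem memGMul {g h : B} (hg : g ∈ G B) (hh : h ∈ G B) : g * h ∈ G B := by
  refine ⟨g * h, ?_⟩
  have h1 : g * (h + 1) = g * h + lam g 1 := circAdd' g h 1
  rw [GAddOne hh, lamGOne hg] at h1
  exact h1

theorem memGAdd {h : B} (hh : h ∈ G B) (g : B) : g + h ∈ G B := by
  obtain ⟨c, rfl⟩ := hh
  exact ⟨g + c, (add_assoc g c 1).symm⟩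

theorem lamEqNegAddMul {g : B} (hg : g ∈ G B) (n : B) : lam g n = neg g + g * n := by
  rw [mulEqAddLam, ← add_assoc, negAddSelf hg, oneAdd]

theorem lamMemG {g n : B} (hg : g ∈ G B) (hn : n ∈ G B) : lam g n ∈ G B := by
  rw [lamEqNegAddMul hg]
  exact memGAdd (memGMul hg hn) (neg g)

theorem lamIdemEq {e : B} (he : e ∈ E B) (z : B) : lam e z = e * z := by
  rw [mulEqAddLam, idemAdd he]

/-- `a · b = λ_a(g_b) + neg b`. -/
theorem dotEq (a c : B) : dot a c = lam a (gp c) + neg c := by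
  show neg a + a * c + neg c = lam a (gp c) + neg c
  rw [mulEqAddLam a c, ← add_assoc, ← epEq, add_assoc, idemAdd (epMemE a)]
  have hsplit : lam a c = lam a (gp c) + lam a (ep c) := by
    rw [← lamAdd, gpAddEp]
  rw [hsplit, add_assoc, idemAdd (lamMemE a (epMemE c))]

/-- `λ_a(z) = e_a ∘ λ_{(g_{a⁻})⁻}(z)`. -/
theorem lamSplit (a z : B) : lam a z = ep a * lam (gp a⁻¹)⁻¹ z := by
  have h0 : a⁻¹ + z = gp a⁻¹ + z := by
    conv_lhs => rw [← gpAddEp a⁻¹]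
    rw [add_assoc, idemAdd (epMemE a⁻¹)]
  calc lam a z = a * (a⁻¹ + z) := rfl
    _ = a * (gp a⁻¹ + z) := by rw [h0]
    _ = a * (gp a⁻¹ * lam (gp a⁻¹)⁻¹ z) := by rw [addEqMulLam (gp a⁻¹) z]
    _ = (a * gp a⁻¹) * lam (gp a⁻¹)⁻¹ z := by rw [← mul_assoc]
    _ = ep a * lam (gp a⁻¹)⁻¹ z := by rw [show a * gp a⁻¹ = ep a from lamOneEp a]

section Ideal

variable {I : Set B}

theorem gpMemN (hI : IsIdeal I) {x : B} (hx : x ∈ I) : gp x ∈ I ∩ G B :=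
  ⟨hI.1 x hx 1 hI.2.1.1.1, gpMemG x⟩

theorem negMemN (hI : IsIdeal I) {x : B} (hx : x ∈ I) : neg x ∈ I ∩ G B := by
  have h := hI.2.2.1.1.2.2.2 (gp x) (gpMemN hI hx)
  rwa [negGp] at h

theorem epMemIE (hI : IsIdeal I) {x : B} (hx : x ∈ I) : ep x ∈ I ∩ E B := by
  refine ⟨?_, epMemE x⟩
  show neg (gp x) + x ∈ I
  exact hI.1 _ (hI.2.2.1.1.2.2.2 (gp x) (gpMemN hI hx)).1 x hx

/-- `q ∘ n + neg q ∈ I ∩ G` for `q ∈ G`, `n ∈ I ∩ G`. -/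
theorem starMem (hI : IsIdeal I) {q n : B} (hq : q ∈ G B) (hn : n ∈ I ∩ G B) :
    q * n + neg q ∈ I ∩ G B := by
  have hninv : n⁻¹ ∈ I ∩ G B := ⟨hI.2.1.1.2.2 n hn.1, memGInv hn.2⟩
  have h1 : ((n⁻¹)⁻¹ + q⁻¹)⁻¹ * q⁻¹ ∈ I := hI.2.2.2.1 q⁻¹ n⁻¹ hninv
  rw [inv_inv] at h1
  have h2 : q * (n + q⁻¹) ∈ I := by
    have h := hI.2.1.1.2.2 _ h1
    rwa [mul_inv_rev, inv_inv, inv_inv] at h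
  have heq : q * (n + q⁻¹) = q * n + neg q := LeftSemiBrace.circ_add q n q⁻¹
  have hG : q * (n + q⁻¹) ∈ G B := memGMul hq (memGAdd (memGInv hq) n)
  exact ⟨heq ▸ h2, heq ▸ hG⟩

/-- `λ_q(n) ∈ I ∩ G` for `q ∈ G`, `n ∈ I ∩ G`. -/
theorem lamGN (hI : IsIdeal I) {q n : B} (hq : q ∈ G B) (hn : n ∈ I ∩ G B) :
    lam q n ∈ I ∩ G B := by
  have hstar := starMem hI hq hn
  have hmem := hI.2.2.1.2 (neg q) (negMemG q) _ hstar
  rw [negNegG hq] at hmem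
  have heq : neg q + (q * n + neg q) + q = lam q n := by
    rw [add_assoc, add_assoc, negAddSelf hq, GAddOne (memGMul hq hn.2),
      mulEqAddLam, ← add_assoc, negAddSelf hq, oneAdd]
  rwa [heq] at hmem

/-- `λ_n(g) + neg g ∈ I ∩ G` for `n ∈ I ∩ G`, `g ∈ G`. -/
theorem lamNGMem (hI : IsIdeal I) {n g : B} (hn : n ∈ I ∩ G B) (hg : g ∈ G B) :
    lam n g + neg g ∈ I ∩ G B := by
  have hn' : g⁻¹ * n * g ∈ I ∩ G B := by
    constructor
    · have h := hI.2.1.2 n hn.1 g⁻¹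
      rwa [inv_inv] at h
    · exact memGMul (memGMul (memGInv hg) hn.2) hg
  have hn'' := lamGN hI hg hn'
  have key : lam n g + neg g = neg n + ((g + lam g (g⁻¹ * n * g)) + neg g) := by
    have h1 : lam n g = neg n + n * g := lamEqNegAddMul hn.2 g
    have h2 : n * g = g * (g⁻¹ * n * g) := by
      rw [mul_assoc g⁻¹ n g, mul_inv_cancel_left]
    have h3 : g * (g⁻¹ * n * g) = g + lam g (g⁻¹ * n * g) := mulEqAddLam _ _
    rw [h1, h2, h3, add_assoc]
  have hmem := hI.2.2.1.1.2.2.1 (neg n) (hI.2.2.1.1.2.2.2 n hn) _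
    (hI.2.2.1.2 g hg _ hn'')
  rwa [← key] at hmem

theorem lamNG' {n g : B} (hn : n ∈ G B) (hg : g ∈ G B) :
    lam n g = (lam n g + neg g) + g := by
  rw [add_assoc, negAddSelf hg, GAddOne (lamMemG hn hg)]

/-- `b · x ∈ I` for `x ∈ I`. -/
theorem dotRightMem (hI : IsIdeal I) (b : B) {x : B} (hx : x ∈ I) : dot b x ∈ I := by
  have hy : lam (gp b⁻¹)⁻¹ (gp x) ∈ I ∩ G B :=
    lamGN hI (memGInv (gpMemG b⁻¹)) (gpMemN hI hx)
  have hi5 : ep b * lam (gp b⁻¹)⁻¹ (gp x) * (ep b)⁻¹ ∈ I := hI.2.1.2 _ hy.1 (ep b)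
  have h5 : ep b * lam (gp b⁻¹)⁻¹ (gp x) =
      (ep b * lam (gp b⁻¹)⁻¹ (gp x) * (ep b)⁻¹) * ep b :=
    (inv_mul_cancel_right _ _).symm
  rw [dotEq, lamSplit b (gp x), h5,
    mulEqAddLam (ep b * lam (gp b⁻¹)⁻¹ (gp x) * (ep b)⁻¹) (ep b),
    add_assoc, idemAdd (lamMemE _ (epMemE b))]
  exact hI.1 _ hi5 _ (negMemN hI hx).1

/-- `x · b ∈ I` for `x ∈ I`. -/
theorem dotLeftMem (hI : IsIdeal I) {x : B} (hx : x ∈ I) (b : B) : dot x b ∈ I := by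
  have hpN : gp x⁻¹ ∈ I ∩ G B := gpMemN hI (hI.2.1.1.2.2 x hx)
  have hpinvN : (gp x⁻¹)⁻¹ ∈ I ∩ G B := ⟨hI.2.1.1.2.2 _ hpN.1, memGInv hpN.2⟩
  have hm : lam (gp x⁻¹)⁻¹ (gp b) + neg (gp b) ∈ I ∩ G B :=
    lamNGMem hI hpinvN (gpMemG b)
  have hi6 : (gp b)⁻¹ * ep x * gp b ∈ I := by
    have h := hI.2.1.2 (ep x) (epMemIE hI hx).1 (gp b)⁻¹
    rwa [inv_inv] at h
  have hn7 : lam (gp b) (gp ((gp b)⁻¹ * ep x * gp b)) ∈ I ∩ G B :=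
    lamGN hI (gpMemG b) (gpMemN hI hi6)
  -- the tail term is in I
  have hT : lam (ep x) (gp b) + neg b ∈ I := by
    have t2 : ep x * gp b = gp b * ((gp b)⁻¹ * ep x * gp b) := by
      rw [mul_assoc (gp b)⁻¹ (ep x) (gp b), mul_inv_cancel_left]
    rw [lamIdemEq (epMemE x) (gp b), t2,
      show (gp b)⁻¹ * ep x * gp b = gp ((gp b)⁻¹ * ep x * gp b) +
        ep ((gp b)⁻¹ * ep x * gp b) from (gpAddEp _).symm,
      circAdd' (gp b) (gp ((gp b)⁻¹ * ep x * gp b)) (ep ((gp b)⁻¹ * ep x * gp b)),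
      ← negGp b, add_assoc, idemAdd (lamMemE _ (epMemE ((gp b)⁻¹ * ep x * gp b))),
      mulEqAddLam (gp b) (gp ((gp b)⁻¹ * ep x * gp b))]
    exact (hI.2.2.1.2 (gp b) (gpMemG b) _ hn7).1
  rw [dotEq, lamSplit x (gp b), lamNG' hpinvN.2 (gpMemG b),
    circAdd' (ep x) (lam (gp x⁻¹)⁻¹ (gp b) + neg (gp b)) (gp b), add_assoc]
  exact hI.1 _ (hI.2.1.1.2.1 (ep x) (epMemIE hI hx).1 _ hm.1) _ hT

end Ideal

/-- if `I` is an ideal of `B`, then `b·x ∈ I` and `x·b ∈ I` for all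
`x ∈ I`, `b ∈ B`; hence `B·I ⊆ I` and `I·B ⊆ I`. -/
theorem ideal_dot_subset (I : Set B) (hI : IsIdeal I) :
    (∀ b : B, ∀ x ∈ I, dot b x ∈ I ∧ dot x b ∈ I) ∧
      dotSet Set.univ I ⊆ I ∧ dotSet I Set.univ ⊆ I := by
  have hmain : ∀ b : B, ∀ x ∈ I, dot b x ∈ I ∧ dot x b ∈ I := fun b x hx =>
    ⟨dotRightMem hI b hx, dotLeftMem hI hx b⟩
  have hIneg : ∀ x ∈ I, neg x ∈ I := fun x hx => (negMemN hI hx).1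
  refine ⟨hmain, ?_, ?_⟩
  · intro z hz
    refine hz I ⟨?_, hI.2.1.1.1, hI.1, hIneg⟩
    rintro w ⟨u, -, v, hv, rfl⟩
    exact (hmain u v hv).1
  · intro z hz
    refine hz I ⟨?_, hI.2.1.1.1, hI.1, hIneg⟩
    rintro w ⟨u, hu, v, -, rfl⟩
    exact (hmain v u hu).2

end LeftSemiBrace
end

section
/- Let B be a left semi-brace such that E is an ideal of B. Then ρ_e(b) = g_b for all e ∈ E and b ∈ B. -/
namespace LeftSemiBrace

variable {B : Type*} [LeftSemiBrace B]

/-- `1` is a left identity for `+`. -/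
lemma one_add' (c : B) : (1 : B) + c = c := by
  have h := circ_add (1 : B) (1 : B) c
  simp only [one_mul, inv_one] at h
  exact (add_left_cancel (1 : B) c ((1 : B) + c) h).symm

/-- `a ∘ b = a + λ_a(b)`. -/
lemma mul_eq_add_lam' (a b : B) : a * b = a + a * (a⁻¹ + b) := by
  have h := circ_add a (1 : B) b
  rwa [one_add' b, mul_one] at h

/-- For `e ∈ E`, `e + 1 = 1`. -/
lemma e_add_one' {e : B} (he : e ∈ E B) : e + (1 : B) = 1 := by
  apply add_left_cancel (e + 1)
  have h1 : (e + 1) + (e + 1) = e + 1 := by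
    rw [add_assoc e 1 (e + 1), one_add', ← add_assoc e e 1, he]
  have h2 : (e + 1) + (1 : B) = e + 1 := by
    rw [add_assoc, one_add']
  rw [h1, h2]

/-- `λ_b(e)` is idempotent when `e` is. -/
lemma lam_mem_E' {e : B} (he : e ∈ E B) (b : B) : b * (b⁻¹ + e) ∈ E B := by
  have h := circ_add b (b⁻¹ + e) e
  have h2 : (b⁻¹ + e) + e = b⁻¹ + e := by rw [add_assoc, he]
  rw [h2] at h
  exact h.symm

/-- if `E` is an ideal of `B`, then `ρ_e(b) = g_b` for all `e ∈ E`,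
`b ∈ B`. -/
theorem rho_e_eq_gp (hE : IsIdeal (E B)) :
    ∀ e ∈ E B, ∀ b : B, rho e b = gp b := by
  intro e he b
  set x : B := (b⁻¹ + e)⁻¹ with hx
  -- Step 1: rho e b = x + 1
  have hxinv : x⁻¹ + e = x⁻¹ := by
    rw [hx, inv_inv, add_assoc, he]
  have h1 : rho e b = x + 1 := by
    rw [rho, ← hx, mul_eq_add_lam' x e, hxinv, mul_inv_cancel]
  -- Step 2: f := λ_b(e) ∈ E and b⁻¹ + e = b⁻¹ * f
  set f : B := b * (b⁻¹ + e) with hf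
  have hfE : f ∈ E B := lam_mem_E' he b
  have hbe : b⁻¹ + e = b⁻¹ * f := by rw [hf, ← mul_assoc, inv_mul_cancel, one_mul]
  -- Step 3: g := b⁻¹ * f⁻¹ * b ∈ E
  have hfinv : f⁻¹ ∈ E B := hE.2.1.1.2.2 f hfE
  have hgE : b⁻¹ * f⁻¹ * b ∈ E B := by
    have := hE.2.1.2 f⁻¹ hfinv b⁻¹
    rwa [inv_inv] at this
  set g : B := b⁻¹ * f⁻¹ * b with hg
  -- Step 4: x = b * g, and conclude
  have hxbg : x = b * g := by
    rw [hx, hbe, hg]; group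
  have hlamg : b * (b⁻¹ + g) ∈ E B := lam_mem_E' hgE b
  rw [h1, hxbg, mul_eq_add_lam' b g, add_assoc, e_add_one' hlamg, gp]

end LeftSemiBrace
end
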